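/- arXiv:1205.2805 — 4 statements merged into one kernel-verified Lean document; each statement's English description precedes it below -/
import Mathlib

section
/- Let λ > 0, let K > 0 satisfy Kλ > 2, and let k > 0 satisfy 0 < kλ < 2 and kλ ≠ 1. If m is a natural number with m ≥ log(Kλ − 1) / (−log|1 − kλ|), then |1 − kλ|^m (Kλ − 1) ≤ 1; in particular the stabilized step U^n = (1 − kλ)^m (1 − Kλ) U^{n−1} satisfies |U^n| ≤ |U^{n−1}|. -/
/-- If `Kλ > 2`, `0 < kλ < 2`, `kλ ≠ 1` and the natural number `m`
satisfies `m ≥ log(Kλ − 1)/(−log|1 − kλ|)`, then `|1 − kλ|^m (Kλ − 1) ≤ 1`; in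
particular the stabilised step `Uⁿ = (1 − kλ)^m (1 − Kλ) Uⁿ⁻¹` satisfies
`|Uⁿ| ≤ |Uⁿ⁻¹|`. -/
theorem stmt1 (lam K k : ℝ) (m : ℕ)
    (hlam : 0 < lam) (hK : 0 < K) (hKlam : 2 < K * lam)
    (hk : 0 < k) (hklam : k * lam < 2) (hklam1 : k * lam ≠ 1)
    (hm : Real.log (K * lam - 1) / (-Real.log |1 - k * lam|) ≤ (m : ℝ)) :
    |1 - k * lam| ^ m * (K * lam - 1) ≤ 1 ∧
    ∀ U : ℝ, |(1 - k * lam) ^ m * (1 - K * lam) * U| ≤ |U| := by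
  set a := |1 - k * lam| with ha
  have hklam0 : 0 < k * lam := mul_pos hk hlam
  have ha0 : 0 < a := abs_pos.mpr (by intro h; apply hklam1; linarith [sub_eq_zero.mp h])
  have ha1 : a < 1 := abs_lt.mpr ⟨by linarith, by linarith⟩
  have hloga : Real.log a < 0 := Real.log_neg ha0 ha1
  have hKl1 : 0 < K * lam - 1 := by linarith
  have hmlog : Real.log (K * lam - 1) ≤ (m : ℝ) * (-Real.log a) :=
    (div_le_iff₀ (by linarith)).mp hm
  have key : a ^ m * (K * lam - 1) ≤ 1 := by
    have hpos : 0 < a ^ m * (K * lam - 1) := mul_pos (pow_pos ha0 m) hKl1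
    have hlog : Real.log (a ^ m * (K * lam - 1)) ≤ 0 := by
      rw [Real.log_mul (by positivity) (ne_of_gt hKl1), Real.log_pow]
      linarith
    calc a ^ m * (K * lam - 1) = Real.exp (Real.log (a ^ m * (K * lam - 1))) :=
          (Real.exp_log hpos).symm
      _ ≤ Real.exp 0 := Real.exp_le_exp.mpr hlog
      _ = 1 := Real.exp_zero
  refine ⟨key, fun U => ?_⟩
  rw [abs_mul, abs_mul, abs_pow, ← ha, abs_sub_comm, show |K * lam - 1| = K * lam - 1 from
    abs_of_pos hKl1]
  calc a ^ m * (K * lam - 1) * |U| ≤ 1 * |U| :=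
        mul_le_mul_of_nonneg_right key (abs_nonneg U)
    _ = |U| := one_mul |U|
end

section
/- Fix λ > 0 and c ∈ (0, 2) with c ≠ 1, and set k = c/λ. For K > 2/λ define m(K) = ⌈log(Kλ − 1)/(−log|1 − c|)⌉ and α(K) = (1 + m(K))/(K + k·m(K)). Then the rescaled cost satisfies lim_{K → ∞} α(K) · K / log(Kλ) = 1/(−log|1 − c|); in particular α(K) → 0 as K → ∞, so the cost reduction factor α(K)/α₀ relative to the classical cost α₀ = λ/2 tends to 0. -/
/-!
With `L = -log |1 - c| > 0`, the number of small steps is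
`m(K) = ⌈log (Kλ - 1) / L⌉ ∼ log (Kλ) / L`. Their total length `k m(K)` is only logarithmic
in `K`, so `K + k m(K) ∼ K`, and hence `α(K) ∼ log (Kλ) / (L K)`, which tends to `0`.
-/

open Filter Topology

theorem Real.tendsto_log_add_div_log (y : ℝ) :
    Tendsto (fun x => Real.log (x + y) / Real.log x) atTop (𝓝 1) := by
  have h := (Real.tendsto_log_comp_add_sub_log y).div_atTop Real.tendsto_log_atTop
  rw [← zero_add 1]
  refine (h.add_const 1).congr' ?_
  filter_upwards [eventually_gt_atTop 1] with x hx
  have : Real.log x ≠ 0 := (Real.log_pos hx).ne'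
  field_simp
  ring

theorem Real.tendsto_log_mul_const_div {lam : ℝ} (hlam : lam ≠ 0) :
    Tendsto (fun x => Real.log (x * lam) / x) atTop (𝓝 0) := by
  have h := Real.isLittleO_log_id_atTop.tendsto_div_nhds_zero.add
    ((tendsto_const_nhds (x := Real.log lam)).div_atTop tendsto_id)
  rw [add_zero] at h
  refine h.congr' ?_
  filter_upwards [eventually_gt_atTop 0] with x hx
  rw [Real.log_mul hx.ne' hlam, add_div]
  rfl

theorem tendsto_one_add_natCeil_mul_log_sub_one_div_log {a : ℝ} (ha : 0 ≤ a) :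
    Tendsto (fun t => (1 + ⌈a * Real.log (t - 1)⌉₊ : ℝ) / Real.log t) atTop (𝓝 a) := by
  have hlog : Tendsto (fun t => Real.log (t - 1)) atTop atTop :=
    Real.tendsto_log_atTop.comp (tendsto_atTop_add_const_right _ (-1) tendsto_id)
  have hceil : Tendsto (fun t =>
      (1 / Real.log (t - 1) + ⌈a * Real.log (t - 1)⌉₊ / Real.log (t - 1)) *
        (Real.log (t + -1) / Real.log t)) atTop (𝓝 ((0 + a) * 1)) :=
    ((tendsto_const_nhds.div_atTop hlog).add ((tendsto_nat_ceil_mul_div_atTop ha).comp hlog)).mul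
      (Real.tendsto_log_add_div_log (-1))
  rw [zero_add, mul_one] at hceil
  refine hceil.congr' ?_
  filter_upwards [eventually_gt_atTop 2] with t ht
  have : Real.log (t - 1) ≠ 0 := (Real.log_pos (by linarith)).ne'
  rw [← sub_eq_add_neg]
  field_simp

theorem tendsto_one_add_div_add_mul_mul_div_log {m : ℝ → ℝ} {a lam : ℝ} (k : ℝ) (hlam : 0 < lam)
    (h : Tendsto (fun K => (1 + m K) / Real.log (K * lam)) atTop (𝓝 a)) :
    Tendsto (fun K => (1 + m K) / (K + k * m K) * K / Real.log (K * lam)) atTop (𝓝 a) := by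
  have hm_div : Tendsto (fun K => m K / K) atTop (𝓝 0) := by
    have h' := (h.mul (Real.tendsto_log_mul_const_div hlam.ne')).sub tendsto_inv_atTop_zero
    rw [mul_zero, sub_zero] at h'
    refine h'.congr' ?_
    filter_upwards [eventually_ne_atTop 0, (Real.tendsto_log_atTop.comp
      (tendsto_id.atTop_mul_const hlam)).eventually_ne_atTop 0]
      with K hK (hlogK : Real.log (K * lam) ≠ 0)
    field_simp
    ring
  have hratio : Tendsto (fun K => (1 + k * (m K / K))⁻¹) atTop (𝓝 1) := by
    simpa using ((hm_div.const_mul k).const_add 1).inv₀ (by simp)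
  rw [← mul_one a]
  refine (h.mul hratio).congr' ?_
  filter_upwards [eventually_gt_atTop 0] with K hK
  field_simp

theorem stmt6_general (lam c k : ℝ) (hlam : 0 < lam) (hc0 : 0 < c) (hc2 : c < 2)
    (hc1 : c ≠ 1)
    (m : ℝ → ℕ) (α : ℝ → ℝ)
    (hm : ∀ K, 2 / lam < K →
      m K = ⌈Real.log (K * lam - 1) / (-Real.log |1 - c|)⌉₊)
    (hα : ∀ K, 2 / lam < K → α K = (1 + (m K : ℝ)) / (K + k * m K)) :
    Filter.Tendsto (fun K => α K * K / Real.log (K * lam)) Filter.atTop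
        (nhds (1 / (-Real.log |1 - c|))) ∧
    Filter.Tendsto α Filter.atTop (nhds 0) ∧
    Filter.Tendsto (fun K => α K / (lam / 2)) Filter.atTop (nhds 0) := by
  set L := -Real.log |1 - c|
  have hL : 0 < L := neg_pos.2 <| Real.log_neg (abs_pos.2 (sub_ne_zero.2 hc1.symm))
    (abs_lt.2 ⟨by linarith, by linarith⟩)
  have hm_log : Tendsto (fun K => (1 + (m K : ℝ)) / Real.log (K * lam)) atTop (𝓝 L⁻¹) := by
    refine ((tendsto_one_add_natCeil_mul_log_sub_one_div_log (inv_nonneg.2 hL.le)).comp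
      (tendsto_id.atTop_mul_const hlam)).congr' ?_
    filter_upwards [eventually_gt_atTop (2 / lam)] with K hK
    simp [hm K hK, div_eq_inv_mul]
  have hcost : Tendsto (fun K => α K * K / Real.log (K * lam)) atTop (𝓝 (1 / L)) := by
    rw [one_div]
    refine (tendsto_one_add_div_add_mul_mul_div_log k hlam hm_log).congr' ?_
    filter_upwards [eventually_gt_atTop (2 / lam)] with K hK
    rw [hα K hK]
  have hα_zero : Tendsto α atTop (𝓝 0) := by
    have h := hcost.mul (Real.tendsto_log_mul_const_div hlam.ne')
    rw [mul_zero] at h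
    refine h.congr' ?_
    filter_upwards [eventually_ne_atTop 0, (Real.tendsto_log_atTop.comp
      (tendsto_id.atTop_mul_const hlam)).eventually_ne_atTop 0]
      with K hK (hlogK : Real.log (K * lam) ≠ 0)
    field_simp
  exact ⟨hcost, hα_zero, by simpa using hα_zero.div_const (lam / 2)⟩

/-- Fix `λ > 0` and `c ∈ (0,2)`, `c ≠ 1`, and set `k = c/λ`. For
`K > 2/λ` define `m(K) = ⌈log(Kλ − 1)/(−log|1 − c|)⌉` and
`α(K) = (1 + m(K))/(K + k·m(K))`. Then `α(K)·K/log(Kλ) → 1/(−log|1 − c|)` as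
`K → ∞`; in particular `α(K) → 0`, so the cost reduction factor `α(K)/α₀` with
`α₀ = λ/2` tends to `0`. -/
theorem stmt6 (lam c k : ℝ) (hlam : 0 < lam) (hc0 : 0 < c) (hc2 : c < 2)
    (hc1 : c ≠ 1) (hk : k = c / lam)
    (m : ℝ → ℕ) (α : ℝ → ℝ)
    (hm : ∀ K, 2 / lam < K →
      m K = ⌈Real.log (K * lam - 1) / (-Real.log |1 - c|)⌉₊)
    (hα : ∀ K, 2 / lam < K → α K = (1 + (m K : ℝ)) / (K + k * m K)) :
    Filter.Tendsto (fun K => α K * K / Real.log (K * lam)) Filter.atTop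
        (nhds (1 / (-Real.log |1 - c|))) ∧
    Filter.Tendsto α Filter.atTop (nhds 0) ∧
    Filter.Tendsto (fun K => α K / (lam / 2)) Filter.atTop (nhds 0) :=
  stmt6_general lam c k hlam hc0 hc2 hc1 m α hm hα
end

section
/- Let λ > 0, let K > 0 satisfy Kλ > 2, let k > 0 satisfy 0 < kλ < 2 and kλ ≠ 1, and let m be a natural number with m ≥ log(Kλ − 1)/(−log|1 − kλ|). Then the sequence obtained by iterating the stabilized cycle, U^n = ((1 − kλ)^m (1 − Kλ))^n u₀, remains bounded by the initial data for all n ≥ 0: |U^n| ≤ |u₀|. -/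
/-- Under the stability condition `m ≥ log(Kλ − 1)/(−log|1 − kλ|)`,
iterating the stabilised cycle, `Uⁿ = ((1 − kλ)^m (1 − Kλ))ⁿ u₀`, remains
bounded by the initial data: `|Uⁿ| ≤ |u₀|` for all `n ≥ 0`. -/
theorem stmt7 (lam K k : ℝ) (m : ℕ) (u₀ : ℝ)
    (hlam : 0 < lam) (hK : 0 < K) (hKlam : 2 < K * lam)
    (hk : 0 < k) (hklam : k * lam < 2) (hklam1 : k * lam ≠ 1)
    (hm : Real.log (K * lam - 1) / (-Real.log |1 - k * lam|) ≤ (m : ℝ)) :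
    ∀ n : ℕ, |((1 - k * lam) ^ m * (1 - K * lam)) ^ n * u₀| ≤ |u₀| := by
  intro n
  have hkl : 0 < k * lam := mul_pos hk hlam
  set a : ℝ := |1 - k * lam| with ha_def
  have ha0 : 0 < a := abs_pos.mpr (by intro h; apply hklam1; linarith)
  have ha1 : a < 1 := abs_lt.mpr ⟨by linarith, by linarith⟩
  have hloga : Real.log a < 0 := Real.log_neg ha0 ha1
  have hb1 : (1 : ℝ) < K * lam - 1 := by linarith
  have hb0 : (0 : ℝ) < K * lam - 1 := by linarith
  -- from hm : log b / (-log a) ≤ m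
  have hmul : Real.log (K * lam - 1) ≤ (m : ℝ) * (-Real.log a) := by
    have := (div_le_iff₀ (by linarith : (0:ℝ) < -Real.log a)).mp hm
    linarith
  have hkey : a ^ m * (K * lam - 1) ≤ 1 := by
    have hpos : 0 < a ^ m * (K * lam - 1) := mul_pos (pow_pos ha0 m) hb0
    have hlog : Real.log (a ^ m * (K * lam - 1)) ≤ 0 := by
      rw [Real.log_mul (by positivity) (ne_of_gt hb0), Real.log_pow]
      linarith
    have := Real.exp_le_exp.mpr hlog
    rwa [Real.exp_log hpos, Real.exp_zero] at this
  have habs : |(1 - k * lam) ^ m * (1 - K * lam)| ≤ 1 := by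
    rw [abs_mul, abs_pow]
    have : |1 - K * lam| = K * lam - 1 := by
      rw [abs_of_nonpos (by linarith)]; ring
    rw [this]
    exact hkey
  calc |((1 - k * lam) ^ m * (1 - K * lam)) ^ n * u₀|
      = |(1 - k * lam) ^ m * (1 - K * lam)| ^ n * |u₀| := by
        rw [abs_mul, abs_pow]
    _ ≤ 1 ^ n * |u₀| := by
        gcongr
    _ = |u₀| := by simp
end

section
/- Let T > 0, let f : ℝ^N × [0,T] → ℝ^N be continuous and continuously differentiable in its first argument. Let u : [0,T] → ℝ^N be differentiable with u̇(t) = f(u(t), t) on [0,T] and u(0) = u₀. Let U : [0,T] → ℝ^N be continuous with U(0) = u₀, differentiable outside a finite set F ⊂ [0,T], and define the residual R(t) = U̇(t) − f(U(t), t) for t ∉ F, assumed integrable on [0,T]. Define e = U − u, the averaged Jacobian J(t) = ∫₀¹ D_u f(s·u(t) + (1−s)·U(t), t) ds, and suppose e(T) ≠ 0. Let φ : [0,T] → ℝ^N be differentiable with −φ̇(t) = J(t)ᵀ φ(t) on [0,T] and φ(T) = e(T)/‖e(T)‖, where ‖·‖ is the Euclidean norm. Then ‖e(T)‖ = ∫₀ᵀ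 ⟨R(t), φ(t)⟩ dt. -/
open MeasureTheory Set
open scoped RealInnerProductSpace

/-!
The averaged Jacobian is exactly what makes the error equation linear: by the fundamental theorem
of calculus along the segment from `u` to `U`, `f(U) - f(u) = J e`, so off the finite set `F`
the error solves `ė = R + J e`. Pairing with the dual solution cancels the `J` terms,
`d/dt ⟪e, φ⟫ = ⟪R, φ⟫`, and integrating over `[0, T]` with `e(0) = 0` and
`⟪e(T), φ(T)⟫ = ‖e(T)‖` gives the representation.
-/

theorem integral_fderiv_segment_apply_sub {E F : Type*} [NormedAddCommGroup E]
    [NormedSpace ℝ E] [NormedAddCommGroup F] [NormedSpace ℝ F] [CompleteSpace F]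
    {g : E → F} {Dg : E → E →L[ℝ] F}
    (hg : ∀ x, HasFDerivAt g (Dg x) x) (hDg : Continuous Dg) (a b : E) :
    (∫ s in (0 : ℝ)..1, Dg (s • a + (1 - s) • b)) (b - a) = g b - g a := by
  set γ : ℝ → E := fun s => s • a + (1 - s) • b with hγ_def
  have hγ : ∀ s, HasDerivAt γ (a - b) s := fun s =>
    (((hasDerivAt_id s).smul_const a).add
      (((hasDerivAt_id s).const_sub 1).smul_const b)).congr_deriv (by simp [sub_eq_add_neg])
  have hDγ : Continuous fun s => Dg (γ s) := hDg.comp (by fun_prop)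
  calc (∫ s in (0 : ℝ)..1, Dg (γ s)) (b - a)
      = ∫ s in (0 : ℝ)..1, -Dg (γ s) (a - b) := by
        rw [ContinuousLinearMap.intervalIntegral_apply (hDγ.intervalIntegrable 0 1)]
        simp only [← map_neg, neg_sub]
    _ = -(g (γ 1) - g (γ 0)) := by
        rw [intervalIntegral.integral_neg, intervalIntegral.integral_eq_sub_of_hasDerivAt
          (fun s _ => (hg (γ s)).comp_hasDerivAt s (hγ s))
          ((hDγ.clm_apply continuous_const).intervalIntegrable 0 1)]
        rfl
    _ = g b - g a := by simp [hγ_def]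

theorem HasDerivAt.inner_of_adjoint {E : Type*} [NormedAddCommGroup E] [InnerProductSpace ℝ E]
    [CompleteSpace E] {e φ : ℝ → E} {A : E →L[ℝ] E} {r : E} {t : ℝ}
    (he : HasDerivAt e (r + A (e t)) t)
    (hφ : HasDerivAt φ (-(ContinuousLinearMap.adjoint A (φ t))) t) :
    HasDerivAt (fun s => ⟪e s, φ s⟫) ⟪r, φ t⟫ t :=
  (he.inner ℝ hφ).congr_deriv <| by
    rw [inner_neg_right, inner_add_left, ContinuousLinearMap.adjoint_inner_right]
    ring

theorem IntervalIntegrable.inner_continuousOn {E : Type*} [NormedAddCommGroup E]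
    [InnerProductSpace ℝ E] {μ : Measure ℝ} {f g : ℝ → E} {a b : ℝ}
    (hf : IntervalIntegrable f μ a b) (hg : ContinuousOn g (uIcc a b)) :
    IntervalIntegrable (fun t => ⟪f t, g t⟫) μ a b := by
  rw [intervalIntegrable_iff] at hf ⊢
  obtain ⟨C, hC⟩ := isCompact_uIcc.exists_bound_of_continuousOn hg
  exact (innerSL ℝ).integrable_of_bilin_of_bdd_right C hf
    ((hg.mono uIoc_subset_uIcc).aestronglyMeasurable measurableSet_uIoc)
    (ae_restrict_of_forall_mem measurableSet_uIoc fun t ht => hC t (uIoc_subset_uIcc ht))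

theorem real_inner_inv_norm_smul_self {E : Type*} [NormedAddCommGroup E] [InnerProductSpace ℝ E]
    (x : E) : ⟪x, ‖x‖⁻¹ • x⟫ = ‖x‖ := by
  rw [real_inner_smul_self_right]
  rcases eq_or_ne ‖x‖ 0 with hx | hx
  · simp [hx]
  · field_simp

theorem stmt8_general (N : ℕ) (T : ℝ) (hT : 0 < T)
    (f : EuclideanSpace ℝ (Fin N) → ℝ → EuclideanSpace ℝ (Fin N))
    (Df : EuclideanSpace ℝ (Fin N) → ℝ →
      (EuclideanSpace ℝ (Fin N) →L[ℝ] EuclideanSpace ℝ (Fin N)))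
    (hDf : ∀ x t, HasFDerivAt (fun y => f y t) (Df x t) x)
    (hDf_cont : Continuous fun p : EuclideanSpace ℝ (Fin N) × ℝ => Df p.1 p.2)
    (u₀ : EuclideanSpace ℝ (Fin N))
    (u : ℝ → EuclideanSpace ℝ (Fin N))
    (hu : ∀ t ∈ Set.Icc (0 : ℝ) T, HasDerivAt u (f (u t) t) t)
    (hu0 : u 0 = u₀)
    (U : ℝ → EuclideanSpace ℝ (Fin N))
    (hU_cont : ContinuousOn U (Set.Icc (0 : ℝ) T))
    (hU0 : U 0 = u₀)
    (F : Set ℝ) (hF : F.Finite)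
    (hU_diff : ∀ t ∈ Set.Icc (0 : ℝ) T \ F, DifferentiableAt ℝ U t)
    (R : ℝ → EuclideanSpace ℝ (Fin N))
    (hR : ∀ t ∈ Set.Icc (0 : ℝ) T \ F, R t = deriv U t - f (U t) t)
    (hR_int : IntervalIntegrable R volume 0 T)
    (e : ℝ → EuclideanSpace ℝ (Fin N)) (he : e = U - u)
    (J : ℝ → (EuclideanSpace ℝ (Fin N) →L[ℝ] EuclideanSpace ℝ (Fin N)))
    (hJ : ∀ t, J t = ∫ s in (0 : ℝ)..1, Df (s • u t + (1 - s) • U t) t)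
    (φ : ℝ → EuclideanSpace ℝ (Fin N))
    (hφ : ∀ t ∈ Set.Icc (0 : ℝ) T,
      HasDerivAt φ (-(ContinuousLinearMap.adjoint (J t) (φ t))) t)
    (hφT : φ T = ‖e T‖⁻¹ • e T) :
    ‖e T‖ = ∫ t in (0 : ℝ)..T, (inner ℝ (R t) (φ t) : ℝ) := by
  subst he
  have hmean_value : ∀ t, f (U t) t - f (u t) t = J t (U t - u t) := fun t => by
    rw [hJ, integral_fderiv_segment_apply_sub (hDf · t)
      (hDf_cont.comp (continuous_id.prodMk continuous_const))]
  have herror : ∀ t ∈ Icc 0 T \ F, HasDerivAt (U - u) (R t + J t ((U - u) t)) t :=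
    fun t ht => ((hU_diff t ht).hasDerivAt.sub (hu t ht.1)).congr_deriv <| by
      rw [hR t ht, Pi.sub_apply, ← hmean_value]
      abel
  have hpairing :
      ∀ t ∈ Ioo 0 T \ F, HasDerivAt (fun s => ⟪(U - u) s, φ s⟫) ⟪R t, φ t⟫ t :=
    fun t ht => (herror t ⟨Ioo_subset_Icc_self ht.1, ht.2⟩).inner_of_adjoint
      (hφ t (Ioo_subset_Icc_self ht.1))
  have hφ_cont : ContinuousOn φ (Icc 0 T) := fun t ht =>
    (hφ t ht).continuousAt.continuousWithinAt
  have hu_cont : ContinuousOn u (Icc 0 T) := fun t ht =>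
    (hu t ht).continuousAt.continuousWithinAt
  rw [integral_eq_of_hasDerivAt_off_countable_of_le _ _ hT.le hF.countable
    ((hU_cont.sub hu_cont).inner hφ_cont) hpairing
    (hR_int.inner_continuousOn (by rwa [uIcc_of_le hT.le]))]
  simp [hu0, hU0, hφT, real_inner_inv_norm_smul_self]

/-- A posteriori error representation for the continuous Galerkin
method: if `u̇ = f(u,·)`, `u(0) = u₀`, `U` is continuous with `U(0) = u₀` and
differentiable outside a finite set with residual `R = U̇ − f(U,·)`, `e = U − u`,
`J(t) = ∫₀¹ D_u f(su + (1−s)U, t) ds`, `e(T) ≠ 0`, and `φ` solves the dual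
problem `−φ̇ = J*φ`, `φ(T) = e(T)/‖e(T)‖`, then `‖e(T)‖ = ∫₀ᵀ (R, φ) dt`. -/
theorem stmt8 (N : ℕ) (T : ℝ) (hT : 0 < T)
    (f : EuclideanSpace ℝ (Fin N) → ℝ → EuclideanSpace ℝ (Fin N))
    (hf_cont : Continuous fun p : EuclideanSpace ℝ (Fin N) × ℝ => f p.1 p.2)
    (Df : EuclideanSpace ℝ (Fin N) → ℝ →
      (EuclideanSpace ℝ (Fin N) →L[ℝ] EuclideanSpace ℝ (Fin N)))
    (hDf : ∀ x t, HasFDerivAt (fun y => f y t) (Df x t) x)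
    (hDf_cont : Continuous fun p : EuclideanSpace ℝ (Fin N) × ℝ => Df p.1 p.2)
    (u₀ : EuclideanSpace ℝ (Fin N))
    (u : ℝ → EuclideanSpace ℝ (Fin N))
    (hu : ∀ t ∈ Set.Icc (0 : ℝ) T, HasDerivAt u (f (u t) t) t)
    (hu0 : u 0 = u₀)
    (U : ℝ → EuclideanSpace ℝ (Fin N))
    (hU_cont : ContinuousOn U (Set.Icc (0 : ℝ) T))
    (hU0 : U 0 = u₀)
    (F : Set ℝ) (hF : F.Finite) (hFsub : F ⊆ Set.Icc (0 : ℝ) T)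
    (hU_diff : ∀ t ∈ Set.Icc (0 : ℝ) T \ F, DifferentiableAt ℝ U t)
    (R : ℝ → EuclideanSpace ℝ (Fin N))
    (hR : ∀ t ∈ Set.Icc (0 : ℝ) T \ F, R t = deriv U t - f (U t) t)
    (hR_int : IntervalIntegrable R volume 0 T)
    (e : ℝ → EuclideanSpace ℝ (Fin N)) (he : e = U - u)
    (J : ℝ → (EuclideanSpace ℝ (Fin N) →L[ℝ] EuclideanSpace ℝ (Fin N)))
    (hJ : ∀ t, J t = ∫ s in (0 : ℝ)..1, Df (s • u t + (1 - s) • U t) t)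
    (heT : e T ≠ 0)
    (φ : ℝ → EuclideanSpace ℝ (Fin N))
    (hφ : ∀ t ∈ Set.Icc (0 : ℝ) T,
      HasDerivAt φ (-(ContinuousLinearMap.adjoint (J t) (φ t))) t)
    (hφT : φ T = ‖e T‖⁻¹ • e T) :
    ‖e T‖ = ∫ t in (0 : ℝ)..T, (inner ℝ (R t) (φ t) : ℝ) :=
  stmt8_general N T hT f Df hDf hDf_cont u₀ u hu hu0 U hU_cont hU0 F hF hU_diff R hR hR_int e he J
    hJ φ hφ hφT
end
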